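/- arXiv:1905.04603 — 5 statements merged into one kernel-verified Lean document; each statement's English description precedes it below -/
import Mathlib

section
/- The AR(1) process satisfies the strong law of large numbers: as T → ∞, (1/T)·(B(1) + ... + B(T)) → h almost surely, where h = α/(1-β). -/
open MeasureTheory ProbabilityTheory Filter Topology

/-- Deterministic lemma: if `y (t+1) = β y t + u (t+1)` with `0 < β < 1` and `u t / t → 0`,
then `y t / t → 0`. -/
lemma ar1_aux (β : ℝ) (hβ0 : 0 < β) (hβ1 : β < 1) (y u : ℕ → ℝ)
    (hrec : ∀ t, y (t + 1) = β * y t + u (t + 1))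
    (hu : Tendsto (fun t : ℕ => u t / t) atTop (𝓝 0)) :
    Tendsto (fun t : ℕ => y t / t) atTop (𝓝 0) := by
  have h1β : 0 < 1 - β := by linarith
  rw [NormedAddCommGroup.tendsto_nhds_zero] at hu ⊢
  intro ε hε
  set δ : ℝ := ε * (1 - β) / 2 with hδdef
  have hδ : 0 < δ := by positivity
  obtain ⟨N, hN⟩ := (eventually_atTop.mp ((hu δ hδ).and (eventually_ge_atTop 1)))
  -- for t ≥ N, |u t| ≤ δ * t
  have hub : ∀ t, N ≤ t → |u t| ≤ δ * t := by
    intro t ht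
    have h := hN t ht
    have ht1 : (1 : ℝ) ≤ t := by exact_mod_cast h.2
    have htpos : (0 : ℝ) < t := by linarith
    have : |u t| / t < δ := by
      have := h.1
      rwa [Real.norm_eq_abs, abs_div, abs_of_pos htpos] at this
    have := (div_lt_iff₀ htpos).mp this
    linarith
  set M : ℝ := |y N| with hM
  have hMnn : 0 ≤ M := abs_nonneg _
  -- key bound by induction (multiplied through by (1-β) to avoid divisions)
  have key : ∀ t, N ≤ t → (1 - β) * |y t| ≤ (1 - β) * (β ^ (t - N) * M) + δ * t := by
    intro t ht
    induction t, ht using Nat.le_induction with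
    | base =>
      simp only [Nat.sub_self, pow_zero, one_mul]
      have : 0 ≤ δ * N := by positivity
      linarith
    | succ t ht ih =>
      have h2 : |y (t + 1)| ≤ β * |y t| + |u (t + 1)| := by
        rw [hrec t]
        calc |β * y t + u (t + 1)| ≤ |β * y t| + |u (t + 1)| := abs_add_le _ _
          _ = β * |y t| + |u (t + 1)| := by rw [abs_mul, abs_of_pos hβ0]
      have h3 : |u (t + 1)| ≤ δ * (t + 1) := by
        have := hub (t + 1) (le_trans ht (Nat.le_succ t))
        push_cast at this ⊢
        linarith
      have h4 : β ^ (t + 1 - N) = β * β ^ (t - N) := by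
        rw [Nat.sub_add_comm ht, pow_succ]
        ring
      have h6 : β * ((1 - β) * |y t|) ≤ β * ((1 - β) * (β ^ (t - N) * M) + δ * t) :=
        mul_le_mul_of_nonneg_left ih (le_of_lt hβ0)
      have h7 : 0 ≤ δ * β := by positivity
      have ht0 : (0 : ℝ) ≤ t := Nat.cast_nonneg t
      have habs : 0 ≤ |u (t + 1)| := abs_nonneg _
      push_cast [h4]
      nlinarith [abs_nonneg (y t), mul_le_mul_of_nonneg_left h2 (le_of_lt h1β)]
  -- β ^ (t - N) * M → 0
  have hpow : Tendsto (fun t : ℕ => β ^ (t - N) * M) atTop (𝓝 0) := by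
    have h0 : Tendsto (fun n : ℕ => β ^ n) atTop (𝓝 0) :=
      tendsto_pow_atTop_nhds_zero_of_lt_one (le_of_lt hβ0) hβ1
    have := (h0.comp (tendsto_sub_atTop_nat N)).mul_const M
    simpa using this
  have hε2 : (0 : ℝ) < ε * (1 - β) / 2 := by positivity
  have hev : ∀ᶠ t : ℕ in atTop, β ^ (t - N) * M < ε * (1 - β) / 2 := by
    have := hpow.eventually (gt_mem_nhds hε2)
    simpa using this
  filter_upwards [hev, eventually_ge_atTop N, eventually_ge_atTop 1] with t h1 h2 h3
  have ht1 : (1 : ℝ) ≤ t := by exact_mod_cast h3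
  have htpos : (0 : ℝ) < t := by linarith
  have hk := key t h2
  rw [Real.norm_eq_abs, abs_div, abs_of_pos htpos, div_lt_iff₀ htpos]
  -- from (1-β)|y t| ≤ (1-β) β^{t-N} M + δ t  and β^{t-N} M < ε(1-β)/2, δ = ε(1-β)/2
  -- deduce (1-β)|y t| < (1-β) ε t, hence |y t| < ε t
  have hstep : (1 - β) * |y t| < (1 - β) * (ε * t) := by
    have hb : (1 - β) * (β ^ (t - N) * M) < (1 - β) * (ε * (1 - β) / 2) :=
      (mul_lt_mul_iff_right₀ h1β).mpr h1
    have hq : (1 - β) * (ε * (1 - β) / 2) ≤ (1 - β) * (ε * (1 - β) / 2) * t := by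
      nlinarith [mul_pos (mul_pos hε h1β) h1β]
    have hδt : δ * t = ε * (1 - β) / 2 * t := by rw [hδdef]
    nlinarith
  exact lt_of_mul_lt_mul_left hstep (le_of_lt h1β)

/-- Strong law of large numbers for the AR(1) process:
`(1/T)·(B(1) + ... + B(T)) → h = α/(1-β)` almost surely. -/
theorem stmt_1
    {Ω : Type*} [MeasureSpace Ω] [IsProbabilityMeasure (ℙ : Measure Ω)]
    (α σε β : ℝ) (hσ : 0 < σε) (hβ : β ∈ Set.Ioo (0 : ℝ) 1)
    (ε : ℕ → Ω → ℝ) (B : ℕ → Ω → ℝ)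
    (hεmeas : ∀ t, Measurable (ε t))
    (hB0meas : Measurable (B 0))
    (hindep : iIndepFun
      (fun i : ℕ => if i = 0 then B 0 else ε i) ℙ)
    (hident : ∀ s t : ℕ, 1 ≤ s → 1 ≤ t → Measure.map (ε s) ℙ = Measure.map (ε t) ℙ)
    (hεL2 : ∀ t : ℕ, 1 ≤ t → MemLp (ε t) 2 ℙ)
    (hmean : ∀ t : ℕ, 1 ≤ t → ∫ ω, ε t ω ∂ℙ = 0)
    (hvar : ∀ t : ℕ, 1 ≤ t → ∫ ω, (ε t ω) ^ 2 ∂ℙ = σε ^ 2)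
    (hB0L2 : MemLp (B 0) 2 ℙ)
    (hrec : ∀ t : ℕ, ∀ ω, B (t + 1) ω = α + β * B t ω + ε (t + 1) ω) :
    ∀ᵐ ω ∂ℙ, Tendsto
      (fun T : ℕ => (∑ t ∈ Finset.range T, B (t + 1) ω) / T)
      atTop (𝓝 (α / (1 - β))) := by
  obtain ⟨hβ0, hβ1⟩ := hβ
  have h1β : 0 < 1 - β := by linarith
  -- SLLN for the noise
  set X : ℕ → Ω → ℝ := fun i => ε (i + 1) with hX
  have hXint : Integrable (X 0) ℙ :=
    (hεL2 1 le_rfl).integrable (by norm_num)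
  have hXindep : Pairwise (Function.onFun (IndepFun · · ℙ) X) := by
    intro i j hij
    have h := hindep.indepFun (show i + 1 ≠ j + 1 by omega)
    simpa [X, if_neg (Nat.succ_ne_zero i), if_neg (Nat.succ_ne_zero j)] using h
  have hXident : ∀ i, IdentDistrib (X i) (X 0) ℙ ℙ := fun i =>
    ⟨(hεmeas (i + 1)).aemeasurable, (hεmeas 1).aemeasurable,
      hident (i + 1) 1 (Nat.le_add_left 1 i) le_rfl⟩
  have hSLLN := strong_law_ae_real X hXint hXindep hXident
  have hmean0 : (ℙ[X 0]) = 0 := hmean 1 le_rfl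
  rw [hmean0] at hSLLN
  filter_upwards [hSLLN] with ω hS
  -- deterministic part; set notation
  set S : ℕ → ℝ := fun n => ∑ i ∈ Finset.range n, ε (i + 1) ω with hSdef
  have hS' : Tendsto (fun n : ℕ => S n / n) atTop (𝓝 0) := hS
  -- u t / t → 0 where u t = ε t ω
  have hu : Tendsto (fun t : ℕ => ε t ω / t) atTop (𝓝 0) := by
    rw [← tendsto_add_atTop_iff_nat 1]
    have hdiff : ∀ t : ℕ, ε (t + 1) ω = S (t + 1) - S t := by
      intro t
      simp [hSdef, Finset.sum_range_succ]
    have h2 : Tendsto (fun t : ℕ => S t / (t + 1)) atTop (𝓝 0) := by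
      have heq : ∀ t : ℕ, S t / (t + 1) = (S t / t) * (t / (t + 1)) := by
        intro t
        rcases Nat.eq_zero_or_pos t with h | h
        · simp [h, hSdef]
        · have ht : (t : ℝ) ≠ 0 := by positivity
          field_simp
      have hrat : Tendsto (fun t : ℕ => (t : ℝ) / (t + 1)) atTop (𝓝 1) := by
        have := tendsto_natCast_div_add_atTop (1 : ℝ)
        simpa using this
      have := hS'.mul hrat
      rw [zero_mul] at this
      exact Tendsto.congr (fun t => (heq t).symm) this
    have h3 : Tendsto (fun t : ℕ => S (t + 1) / (t + 1)) atTop (𝓝 0) := by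
      have := (tendsto_add_atTop_iff_nat 1).mpr hS'
      simpa using this
    have := h3.sub h2
    rw [sub_zero] at this
    refine Tendsto.congr (fun t => ?_) this
    rw [hdiff t]
    push_cast
    ring
  -- B t ω / t → 0
  set hval : ℝ := α / (1 - β) with hhval
  have hrecy : ∀ t : ℕ, (fun t => B t ω - hval) (t + 1)
      = β * (fun t => B t ω - hval) t + (fun t => ε t ω) (t + 1) := by
    intro t
    simp only
    rw [hrec t ω, hhval]
    field_simp
    ring
  have hy := ar1_aux β hβ0 hβ1 (fun t => B t ω - hval) (fun t => ε t ω) hrecy hu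
  have hBlim : Tendsto (fun t : ℕ => B t ω / t) atTop (𝓝 0) := by
    have hc : Tendsto (fun t : ℕ => hval / t) atTop (𝓝 0) :=
      tendsto_const_div_atTop_nhds_zero_nat hval
    have := hy.add hc
    rw [add_zero] at this
    refine Tendsto.congr (fun t => ?_) this
    ring
  -- key identity : (1-β) * ∑_{t<T} B(t+1) = T*α + β*(B 0 ω - B T ω) + S T
  have hident2 : ∀ T : ℕ, (1 - β) * (∑ t ∈ Finset.range T, B (t + 1) ω)
      = T * α + β * (B 0 ω - B T ω) + S T := by
    intro T
    induction T with
    | zero => simp [hSdef]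
    | succ T ih =>
      rw [Finset.sum_range_succ, mul_add, ih]
      have hST : S (T + 1) = S T + ε (T + 1) ω := by
        simp [hSdef, Finset.sum_range_succ]
      rw [hST, hrec T ω]
      push_cast
      ring
  -- conclude
  have hlim : Tendsto (fun T : ℕ => (α + β * (B 0 ω / T - B T ω / T) + S T / T) / (1 - β))
      atTop (𝓝 ((α + β * (0 - 0) + 0) / (1 - β))) := by
    have hB0 : Tendsto (fun T : ℕ => B 0 ω / T) atTop (𝓝 0) :=
      tendsto_const_div_atTop_nhds_zero_nat _
    exact ((((tendsto_const_nhds.add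
      ((hB0.sub hBlim).const_mul β))).add hS').div_const (1 - β))
  have hval2 : (α + β * (0 - 0) + 0) / (1 - β) = α / (1 - β) := by ring
  rw [hval2] at hlim
  refine hlim.congr' ?_
  filter_upwards [eventually_ge_atTop 1] with T hT
  have hT0 : (T : ℝ) ≠ 0 := by
    have : (1 : ℝ) ≤ T := by exact_mod_cast hT
    linarith
  have h1β' : (1 - β) ≠ 0 := ne_of_gt h1β
  have hsum : (∑ t ∈ Finset.range T, B (t + 1) ω)
      = (↑T * α + β * (B 0 ω - B T ω) + S T) / (1 - β) := by
    rw [eq_div_iff h1β']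
    linarith [hident2 T]
  rw [hsum]
  field_simp
end

section
/- Every constant withdrawal rate below 1 - e^{-(c+g)} is sustainable: if w ∈ (0,1) satisfies w < 1 - e^{-(c+g)}, then the wealth process V(t) = V(t-1)·e^{G(t)+Δ(t)}·(1-w), V(0) = 1, satisfies V(t) → ∞ almost surely as t → ∞. -/
open MeasureTheory ProbabilityTheory Filter Topology
open scoped ENNReal NNReal

-- helper 1: tendsto of f n / n to positive limit implies f tendsto atTop
lemma aux_tendsto_atTop {f : ℕ → ℝ} {r : ℝ} (hr : 0 < r)
    (h : Tendsto (fun n : ℕ => f n / n) atTop (𝓝 r)) : Tendsto f atTop atTop := by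
  have h2 : ∀ᶠ n : ℕ in atTop, r / 2 < f n / n :=
    h.eventually (eventually_gt_nhds (by linarith))
  have h3 : Tendsto (fun n : ℕ => r / 2 * n) atTop atTop :=
    (tendsto_natCast_atTop_atTop (R := ℝ)).const_mul_atTop (by linarith)
  apply tendsto_atTop_mono' _ _ h3
  filter_upwards [h2, eventually_ge_atTop 1] with n hn hn1
  have hnp : (0:ℝ) < n := by exact_mod_cast hn1
  calc r / 2 * n ≤ f n / n * n := by nlinarith
    _ = f n := by field_simp

-- helper 2: eLpNorm bound from second moment
lemma aux_eLpNorm_le {Ω : Type*} {m : MeasurableSpace Ω} {μ : Measure Ω}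
    {f : Ω → ℝ} (hf : MemLp f 2 μ) {v : ℝ}
    (hint : ∫ ω, f ω ^ 2 ∂μ = v) : eLpNorm f 2 μ ≤ ENNReal.ofReal (Real.sqrt v) := by
  have hv : 0 ≤ v := hint ▸ integral_nonneg fun ω => sq_nonneg _
  rw [eLpNorm_eq_lintegral_rpow_enorm_toReal two_ne_zero ENNReal.ofNat_ne_top]
  have h1 : ∀ ω, ‖f ω‖ₑ ^ (ENNReal.toReal 2) = ENNReal.ofReal (f ω ^ 2) := by
    intro ω
    rw [ENNReal.toReal_ofNat, Real.enorm_eq_ofReal_abs,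
      ENNReal.ofReal_rpow_of_nonneg (abs_nonneg _) (by norm_num : (0:ℝ) ≤ 2),
      show ((2:ℝ)) = ((2:ℕ):ℝ) by norm_num, Real.rpow_natCast, sq_abs]
  simp only [h1]
  have hint2 : Integrable (fun ω => f ω ^ 2) μ :=
    (memLp_two_iff_integrable_sq hf.aestronglyMeasurable).1 hf
  rw [← ofReal_integral_eq_lintegral_ofReal hint2 (Eventually.of_forall fun ω => sq_nonneg _),
    hint, ENNReal.toReal_ofNat,
    ENNReal.ofReal_rpow_of_nonneg hv (by norm_num : (0:ℝ) ≤ 1/2), Real.sqrt_eq_rpow]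

-- helper 3: L² bounded sequence has B t / t → 0 a.s.
lemma aux_div_tendsto {Ω : Type*} {m : MeasurableSpace Ω} {μ : Measure Ω}
    [IsProbabilityMeasure μ] (B : ℕ → Ω → ℝ) (hBmeas : ∀ t, Measurable (B t))
    (M : ℝ) (hM0 : 0 ≤ M) (hbound : ∀ t, eLpNorm (B t) 2 μ ≤ ENNReal.ofReal M) :
    ∀ᵐ ω ∂μ, Tendsto (fun t : ℕ => B t ω / t) atTop (𝓝 0) := by
  have key : ∀ k : ℕ, ∀ᵐ ω ∂μ, ∀ᶠ t : ℕ in atTop,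
      |B (t+1) ω| < ((t:ℝ)+1)/((k:ℝ)+1) := by
    intro k
    set δ : ℝ := 1/((k:ℝ)+1) with hδ
    have hδ0 : 0 < δ := by positivity
    set s : ℕ → Set Ω :=
      fun t => {ω | ENNReal.ofReal (δ*((t:ℝ)+1)) ≤ ‖B (t+1) ω‖ₑ} with hs
    have hmeasb : ∀ t, μ (s t) ≤ ENNReal.ofReal ((M/δ)^2 * (1/((t:ℝ)+1)^2)) := by
      intro t
      have hx : (0:ℝ) < δ*((t:ℝ)+1) := by positivity
      have h1 := meas_ge_le_mul_pow_eLpNorm_enorm μ two_ne_zero ENNReal.ofNat_ne_top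
        ((hBmeas (t+1)).aestronglyMeasurable)
        (ε := ENNReal.ofReal (δ*((t:ℝ)+1))) (ne_of_gt (ENNReal.ofReal_pos.2 hx))
        (fun h => absurd h ENNReal.ofReal_ne_top)
      refine h1.trans ?_
      have h2 : eLpNorm (B (t+1)) 2 μ ^ ENNReal.toReal 2
          ≤ (ENNReal.ofReal M) ^ ENNReal.toReal 2 :=
        ENNReal.rpow_le_rpow (hbound _) ENNReal.toReal_nonneg
      calc (ENNReal.ofReal (δ*((t:ℝ)+1)))⁻¹ ^ ENNReal.toReal 2
            * eLpNorm (B (t+1)) 2 μ ^ ENNReal.toReal 2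
          ≤ (ENNReal.ofReal (δ*((t:ℝ)+1)))⁻¹ ^ ENNReal.toReal 2
            * (ENNReal.ofReal M) ^ ENNReal.toReal 2 := mul_le_mul_right h2 _
        _ = ENNReal.ofReal ((M/δ)^2 * (1/((t:ℝ)+1)^2)) := by
            rw [← ENNReal.ofReal_inv_of_pos hx, ENNReal.toReal_ofNat,
              ENNReal.ofReal_rpow_of_nonneg (by positivity) (by norm_num : (0:ℝ) ≤ 2),
              ENNReal.ofReal_rpow_of_nonneg hM0 (by norm_num : (0:ℝ) ≤ 2),
              ← ENNReal.ofReal_mul (by positivity)]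
            have heq : (δ*((t:ℝ)+1))⁻¹ ^ (2:ℝ) * M ^ (2:ℝ)
                = (M/δ)^2 * (1/((t:ℝ)+1)^2) := by
              rw [show ((2:ℝ)) = ((2:ℕ):ℝ) by norm_num, Real.rpow_natCast,
                Real.rpow_natCast]
              rw [mul_inv, mul_pow, div_pow, one_div, inv_pow, inv_pow,
                div_eq_mul_inv]
              ring
            rw [heq]
    have hsummable : Summable (fun t : ℕ => (M/δ)^2 * (1/((t:ℝ)+1)^2)) := by
      apply Summable.mul_left
      have h0 : Summable (fun n : ℕ => 1/(n:ℝ)^2) :=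
        Real.summable_one_div_nat_pow.2 one_lt_two
      exact ((summable_nat_add_iff 1).2 h0).congr (fun n => by push_cast; ring)
    have hsum : (∑' t, μ (s t)) ≠ ⊤ := by
      refine ne_top_of_le_ne_top ?_ (ENNReal.tsum_le_tsum hmeasb)
      rw [← ENNReal.ofReal_tsum_of_nonneg (fun n => by positivity) hsummable]
      exact ENNReal.ofReal_ne_top
    filter_upwards [ae_eventually_notMem hsum] with ω hω
    filter_upwards [hω] with t ht
    simp only [hs, Set.mem_setOf_eq, not_le] at ht
    rw [Real.enorm_eq_ofReal_abs] at ht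
    have h3 := (ENNReal.ofReal_lt_ofReal_iff (by positivity)).1 ht
    calc |B (t+1) ω| < δ*((t:ℝ)+1) := h3
      _ = ((t:ℝ)+1)/((k:ℝ)+1) := by rw [hδ]; ring
  filter_upwards [ae_all_iff.2 key] with ω hω
  rw [← Filter.tendsto_add_atTop_iff_nat 1, NormedAddCommGroup.tendsto_nhds_zero]
  intro η hη
  obtain ⟨k, hk⟩ := exists_nat_one_div_lt hη
  filter_upwards [hω k] with t ht
  push_cast
  rw [Real.norm_eq_abs, abs_div, abs_of_nonneg (by positivity : (0:ℝ) ≤ (t:ℝ)+1)]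
  have h2 : |B (t+1) ω| / ((t:ℝ)+1) < 1/((k:ℝ)+1) := by
    rw [div_lt_iff₀ (by positivity : (0:ℝ) < (t:ℝ)+1)]
    calc |B (t+1) ω| < ((t:ℝ)+1)/((k:ℝ)+1) := ht
      _ = 1/((k:ℝ)+1) * ((t:ℝ)+1) := by ring
  linarith

/-- Every constant withdrawal rate `w < 1 - e^{-(c+g)}` is sustainable: the wealth
process `V(t) = V(t-1)·e^{G(t)+Δ(t)}·(1-w)`, `V(0) = 1`, tends to `∞` a.s. -/
theorem stmt_11
    {Ω : Type*} [MeasureSpace Ω] [IsProbabilityMeasure (ℙ : Measure Ω)]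
    (α c g σε β : ℝ) (hσ : 0 < σε) (hβ : β ∈ Set.Ioo (0 : ℝ) 1)
    (ε : ℕ → Ω → ℝ) (B : ℕ → Ω → ℝ) (G : ℕ → Ω → ℝ)
    (hεmeas : ∀ t, Measurable (ε t))
    (hGmeas : ∀ t, Measurable (G t))
    (hB0meas : Measurable (B 0))
    (hindep : iIndepFun
      (fun i : ℕ => if i = 0 then B 0 else ε i) ℙ)
    (hident : ∀ s t : ℕ, 1 ≤ s → 1 ≤ t → Measure.map (ε s) ℙ = Measure.map (ε t) ℙ)
    (hεL2 : ∀ t : ℕ, 1 ≤ t → MemLp (ε t) 2 ℙ)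
    (hmean : ∀ t : ℕ, 1 ≤ t → ∫ ω, ε t ω ∂ℙ = 0)
    (hvar : ∀ t : ℕ, 1 ≤ t → ∫ ω, (ε t ω) ^ 2 ∂ℙ = σε ^ 2)
    (hB0L2 : MemLp (B 0) 2 ℙ)
    (hrec : ∀ t : ℕ, ∀ ω, B (t + 1) ω = α + β * B t ω + ε (t + 1) ω)
    (hGindep : IndepFun (fun ω (t : ℕ) => G (t + 1) ω)
      (fun ω (t : ℕ) => ε (t + 1) ω) ℙ)
    (hGslln : ∀ᵐ ω ∂ℙ, Tendsto
      (fun T : ℕ => (∑ t ∈ Finset.range T, G (t + 1) ω) / T) atTop (𝓝 g))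
    (w : ℝ) (hw : w ∈ Set.Ioo (0 : ℝ) 1)
    (hws : w < 1 - Real.exp (-(c + g)))
    (V : ℕ → Ω → ℝ)
    (hV0 : ∀ ω, V 0 ω = 1)
    (hVrec : ∀ t : ℕ, ∀ ω,
      V (t + 1) ω = V t ω * Real.exp (G (t + 1) ω + (B (t + 1) ω - B t ω + c)) * (1 - w)) :
    ∀ᵐ ω ∂ℙ, Tendsto (fun t : ℕ => V t ω) atTop atTop := by
  obtain ⟨hβ0, hβ1⟩ := hβ
  obtain ⟨hw0, hw1'⟩ := hw
  have hw1 : (0:ℝ) < 1 - w := by linarith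
  set r : ℝ := g + c + Real.log (1 - w) with hr_def
  have hr : 0 < r := by
    have h1 : Real.exp (-(c + g)) < 1 - w := by linarith
    have h2 : -(c + g) < Real.log (1 - w) := (Real.lt_log_iff_exp_lt hw1).2 h1
    simp only [hr_def]; linarith
  -- measurability of B
  have hBmeas : ∀ t, Measurable (B t) := by
    intro t
    induction t with
    | zero => exact hB0meas
    | succ t ih =>
      have heq : B (t+1) = fun ω => α + β * B t ω + ε (t+1) ω := funext (hrec t)
      rw [heq]
      exact (measurable_const.add (ih.const_mul β)).add (hεmeas (t+1))
  -- uniform L² bound for B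
  set M : ℝ := (eLpNorm (B 0) 2 ℙ).toReal + (|α| + σε)/(1-β) with hM_def
  have hA : 0 ≤ (eLpNorm (B 0) 2 ℙ).toReal := ENNReal.toReal_nonneg
  have hD : (1-β) * ((|α| + σε)/(1-β)) = |α| + σε := by
    rw [mul_comm, div_mul_cancel₀ _ (by linarith : (1:ℝ)-β ≠ 0)]
  have hM0 : 0 ≤ M := by
    have : 0 ≤ (|α| + σε)/(1-β) := div_nonneg (by positivity) (by linarith)
    simp only [hM_def]; linarith
  have hBL2 : ∀ t, MemLp (B t) 2 ℙ ∧ eLpNorm (B t) 2 ℙ ≤ ENNReal.ofReal M := by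
    intro t
    induction t with
    | zero =>
      refine ⟨hB0L2, ?_⟩
      rw [← ENNReal.ofReal_toReal hB0L2.2.ne]
      apply ENNReal.ofReal_le_ofReal
      simp only [hM_def]
      have : 0 ≤ (|α| + σε)/(1-β) := div_nonneg (by positivity) (by linarith)
      linarith
    | succ t ih =>
      have heq : B (t+1) = fun ω => (α + β * B t ω) + ε (t+1) ω := funext (hrec t)
      have h1 : MemLp (fun ω => α + β * B t ω) 2 ℙ :=
        (memLp_const α).add (ih.1.const_mul β)
      have h2 : MemLp (ε (t+1)) 2 ℙ := hεL2 (t+1) (Nat.le_add_left 1 t)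
      refine ⟨by rw [heq]; exact h1.add h2, ?_⟩
      have hεb : eLpNorm (ε (t+1)) 2 ℙ ≤ ENNReal.ofReal σε := by
        have := aux_eLpNorm_le h2 (hvar (t+1) (Nat.le_add_left 1 t))
        rwa [Real.sqrt_sq hσ.le] at this
      have hconst : eLpNorm (fun _ : Ω => α) 2 ℙ = ENNReal.ofReal |α| := by
        rw [eLpNorm_const α two_ne_zero (NeZero.ne ℙ), measure_univ, ENNReal.one_rpow,
          mul_one, Real.enorm_eq_ofReal_abs]
      have hsmul : eLpNorm (fun ω => β * B t ω) 2 ℙ ≤ ENNReal.ofReal (β * M) := by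
        have he : (fun ω => β * B t ω) = β • B t := rfl
        rw [he, eLpNorm_const_smul]
        have hb : ‖β‖ₑ = ENNReal.ofReal β := by
          rw [Real.enorm_eq_ofReal_abs, abs_of_pos hβ0]
        rw [hb]
        calc ENNReal.ofReal β * eLpNorm (B t) 2 ℙ
            ≤ ENNReal.ofReal β * ENNReal.ofReal M := mul_le_mul_right ih.2 _
          _ = ENNReal.ofReal (β * M) := (ENNReal.ofReal_mul hβ0.le).symm
      rw [heq]
      calc eLpNorm (fun ω => (α + β * B t ω) + ε (t+1) ω) 2 ℙ
          ≤ eLpNorm (fun ω => α + β * B t ω) 2 ℙ + eLpNorm (ε (t+1)) 2 ℙ :=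
            eLpNorm_add_le h1.aestronglyMeasurable h2.aestronglyMeasurable (by norm_num : (1:ℝ≥0∞) ≤ 2)
        _ ≤ (eLpNorm (fun _ : Ω => α) 2 ℙ + eLpNorm (fun ω => β * B t ω) 2 ℙ)
            + ENNReal.ofReal σε := by
            refine add_le_add ?_ hεb
            have he2 : (fun ω => α + β * B t ω)
                = (fun _ : Ω => α) + fun ω => β * B t ω := rfl
            rw [he2]
            exact eLpNorm_add_le aestronglyMeasurable_const
              (ih.1.const_mul β).aestronglyMeasurable (by norm_num : (1:ℝ≥0∞) ≤ 2)
        _ ≤ (ENNReal.ofReal |α| + ENNReal.ofReal (β * M)) + ENNReal.ofReal σε :=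
            add_le_add (add_le_add hconst.le hsmul) le_rfl
        _ = ENNReal.ofReal (|α| + β * M + σε) := by
            rw [← ENNReal.ofReal_add (abs_nonneg α) (by nlinarith),
              ← ENNReal.ofReal_add (by positivity) hσ.le]
        _ ≤ ENNReal.ofReal M := by
            apply ENNReal.ofReal_le_ofReal
            simp only [hM_def]
            nlinarith [hD, hA]
  -- B t / t → 0 a.s.
  have hBdiv : ∀ᵐ ω ∂ℙ, Tendsto (fun t : ℕ => B t ω / t) atTop (𝓝 0) :=
    aux_div_tendsto B hBmeas M hM0 (fun t => (hBL2 t).2)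
  filter_upwards [hGslln, hBdiv] with ω hG hB'
  -- closed form for V
  have hform : ∀ t : ℕ, V t ω = Real.exp ((∑ s ∈ Finset.range t, G (s+1) ω)
      + B t ω - B 0 ω + t * (c + Real.log (1-w))) := by
    intro t
    induction t with
    | zero => simp [hV0 ω]
    | succ t ih =>
      rw [hVrec t ω, ih, Finset.sum_range_succ]
      set L : ℝ := Real.log (1-w) with hLdef
      rw [show (1:ℝ)-w = Real.exp L from (Real.exp_log hw1).symm,
        ← Real.exp_add, ← Real.exp_add]
      congr 1
      push_cast
      ring
  -- exponent tends to infinity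
  have key : Tendsto (fun t : ℕ => (∑ s ∈ Finset.range t, G (s+1) ω)
      + B t ω - B 0 ω + t * (c + Real.log (1-w))) atTop atTop := by
    apply aux_tendsto_atTop hr
    have h1 : Tendsto (fun t : ℕ => (∑ s ∈ Finset.range t, G (s+1) ω)/t
        + B t ω/t - B 0 ω/t + (c + Real.log (1-w))) atTop
        (𝓝 (g + 0 - 0 + (c + Real.log (1-w)))) :=
      (((hG.add hB').sub (tendsto_const_div_atTop_nhds_zero_nat (B 0 ω))).add
        tendsto_const_nhds)
    have h2 : g + 0 - 0 + (c + Real.log (1-w)) = r := by simp only [hr_def]; ring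
    rw [h2] at h1
    refine Tendsto.congr' ?_ h1
    filter_upwards [eventually_ge_atTop 1] with t ht
    have htne : (t:ℝ) ≠ 0 := by
      have : (0:ℝ) < t := by exact_mod_cast ht
      linarith
    field_simp
  have := Real.tendsto_exp_atTop.comp key
  exact this.congr fun t => (hform t).symm
end

section
/- Any withdrawal process whose asymptotic rate exceeds c + g is not sustainable: if (W(t))_{t≥1} are random variables with values in (0,1) such that (1/T)·(W(1)+...+W(T)) → w almost surely for a constant w > c + g, then the wealth process V(t) = V(t-1)·e^{G(t)+Δ(t)}·(1-W(t)), V(0) = 1, satisfies limsup_{t→∞} V(t) ≤ 1 almost surely; in particular, V(t) does not converge to ∞ almost surely. -/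
open MeasureTheory ProbabilityTheory Filter Topology

/-- Deterministic core: along a single path, the wealth tends to 0. -/
lemma aux_det (c g w : ℝ) (hwgt : c + g < w) (Gs Ws Bs Vs : ℕ → ℝ)
    (hWmem : ∀ t, 1 ≤ t → Ws t ∈ Set.Ioo (0:ℝ) 1)
    (hG : Tendsto (fun T : ℕ => (∑ t ∈ Finset.range T, Gs (t+1)) / T) atTop (𝓝 g))
    (hWt : Tendsto (fun T : ℕ => (∑ t ∈ Finset.range T, Ws (t+1)) / T) atTop (𝓝 w))
    (hB : Tendsto (fun T : ℕ => Bs T / T) atTop (𝓝 0))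
    (hV0 : Vs 0 = 1)
    (hVrec : ∀ t, Vs (t+1)
      = Vs t * Real.exp (Gs (t+1) + (Bs (t+1) - Bs t + c)) * (1 - Ws (t+1))) :
    Tendsto Vs atTop (𝓝 0) := by
  set L : ℕ → ℝ := fun T => ∑ t ∈ Finset.range T,
    (Gs (t+1) + (Bs (t+1) - Bs t + c) + Real.log (1 - Ws (t+1))) with hLdef
  have hVL : ∀ T, Vs T = Real.exp (L T) := by
    intro T
    induction T with
    | zero => simp [hLdef, hV0]
    | succ n ih =>
      have hWn := hWmem (n+1) (by omega)
      have h1W : (0:ℝ) < 1 - Ws (n+1) := by linarith [hWn.2]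
      rw [hVrec n, ih, hLdef]
      simp only []
      rw [Finset.sum_range_succ,
        show (1 - Ws (n+1)) = Real.exp (Real.log (1 - Ws (n+1))) from (Real.exp_log h1W).symm,
        ← Real.exp_add, ← Real.exp_add]
      rw [Real.log_exp, add_assoc]
  -- bound on L
  have hLle : ∀ T : ℕ, L T ≤ (∑ t ∈ Finset.range T, Gs (t+1)) + (Bs T - Bs 0) + T * c
      - ∑ t ∈ Finset.range T, Ws (t+1) := by
    intro T
    have h1 : L T ≤ ∑ t ∈ Finset.range T,
        (Gs (t+1) + (Bs (t+1) - Bs t + c) + (- Ws (t+1))) := by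
      apply Finset.sum_le_sum
      intro i _
      have hWi := hWmem (i+1) (by omega)
      have h1W : (0:ℝ) < 1 - Ws (i+1) := by linarith [hWi.2]
      have := Real.log_le_sub_one_of_pos h1W
      have : Real.log (1 - Ws (i+1)) ≤ - Ws (i+1) := by linarith
      linarith
    have h2 : ∑ t ∈ Finset.range T, (Gs (t+1) + (Bs (t+1) - Bs t + c) + (- Ws (t+1)))
        = (∑ t ∈ Finset.range T, Gs (t+1)) + (Bs T - Bs 0) + T * c
          - ∑ t ∈ Finset.range T, Ws (t+1) := by
      rw [Finset.sum_add_distrib, Finset.sum_add_distrib, Finset.sum_add_distrib,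
        Finset.sum_range_sub (f := Bs), Finset.sum_neg_distrib, Finset.sum_const,
        Finset.card_range]
      push_cast
      ring
    linarith [h1, h2.le, h2.ge]
  -- the averaged upper bound tends to a negative limit
  set U : ℕ → ℝ := fun T => (∑ t ∈ Finset.range T, Gs (t+1)) / T + Bs T / T - Bs 0 / T + c
    - (∑ t ∈ Finset.range T, Ws (t+1)) / T with hUdef
  have hU : Tendsto U atTop (𝓝 (g + 0 - 0 + c - w)) := by
    exact ((((hG.add hB).sub (tendsto_const_div_atTop_nhds_zero_nat (Bs 0))).add
      tendsto_const_nhds).sub hWt)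
  set l : ℝ := g + 0 - 0 + c - w with hl
  have hlneg : l < 0 := by simp [hl]; linarith
  have hev : ∀ᶠ T : ℕ in atTop, U T ≤ l / 2 := hU.eventually (eventually_le_nhds (by linarith))
  have hLbot : Tendsto L atTop atBot := by
    apply tendsto_atBot_mono' atTop (f₁ := fun T : ℕ => (l/2) * T)
    · filter_upwards [hev, eventually_ge_atTop 1] with T hT hT1
      have hTpos : (0:ℝ) < T := by exact_mod_cast hT1
      have key : L T ≤ T * U T := by
        have := hLle T
        have hUeq : T * U T = (∑ t ∈ Finset.range T, Gs (t+1)) + Bs T - Bs 0 + T * c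
            - ∑ t ∈ Finset.range T, Ws (t+1) := by
          simp only [hUdef]
          field_simp
        rw [hUeq]; linarith
      calc L T ≤ T * U T := key
        _ ≤ T * (l/2) := by apply mul_le_mul_of_nonneg_left hT hTpos.le
        _ = (l/2) * T := by ring
    · exact (tendsto_const_mul_atBot_of_neg (by linarith : l/2 < 0)).mpr
        tendsto_natCast_atTop_atTop
  have : Tendsto (fun T => Real.exp (L T)) atTop (𝓝 0) := Real.tendsto_exp_atBot.comp hLbot
  exact this.congr (fun T => (hVL T).symm)


open scoped ENNReal NNReal

lemma aux_B {Ω : Type*} [MeasureSpace Ω] [IsProbabilityMeasure (ℙ : Measure Ω)]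
    (B : ℕ → Ω → ℝ) (hmeas : ∀ t, Measurable (B t)) (K : ℝ)
    (hK : ∀ t, eLpNorm (B t) 2 ℙ ≤ ENNReal.ofReal K) :
    ∀ᵐ ω ∂ℙ, Tendsto (fun T : ℕ => B T ω / T) atTop (𝓝 0) := by
  have key : ∀ m : ℕ, ∀ᵐ ω ∂ℙ, ∀ᶠ T : ℕ in atTop,
      |B (T+1) ω| < (1/(m+1) : ℝ) * (T+1) := by
    intro m
    set d : ℝ := 1/(m+1) with hd
    have hd0 : 0 < d := by positivity
    set s : ℕ → Set Ω := fun T => {ω | ENNReal.ofReal (d * (T+1)) ≤ ‖B (T+1) ω‖₊} with hs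
    have hsum : (∑' T, ℙ (s T)) ≠ ⊤ := by
      have hbound : ∀ T : ℕ, ℙ (s T) ≤
          ENNReal.ofReal ((d * (T+1))⁻¹ ^ (2:ℝ)) * ENNReal.ofReal K ^ (2:ℝ) := by
        intro T
        have hdT : (0:ℝ) < d * (T+1) := by positivity
        have h1 := meas_ge_le_mul_pow_eLpNorm_enorm (μ := ℙ) (p := 2) (f := B (T+1))
          (by norm_num) (by norm_num) (hmeas (T+1)).aestronglyMeasurable
          (ε := ENNReal.ofReal (d * (T+1))) (ENNReal.ofReal_pos.2 hdT).ne' (fun h => absurd h ENNReal.ofReal_ne_top)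
        refine h1.trans ?_
        have htR : (2:ℝ≥0∞).toReal = (2:ℝ) := by norm_num
        rw [htR]
        gcongr
        · rw [← ENNReal.ofReal_inv_of_pos hdT, ← ENNReal.ofReal_rpow_of_pos (by positivity)]
        · exact hK (T+1)
      refine ne_top_of_le_ne_top ?_ (ENNReal.tsum_le_tsum hbound)
      rw [ENNReal.tsum_mul_right]
      apply ENNReal.mul_ne_top _ (ENNReal.rpow_ne_top_of_nonneg (by norm_num) ENNReal.ofReal_ne_top)
      have hsummable : Summable (fun T : ℕ => (d * (T+1))⁻¹ ^ (2:ℝ)) := by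
        have h2 : Summable (fun n : ℕ => 1 / (n:ℝ) ^ 2) :=
          Real.summable_one_div_nat_pow.2 one_lt_two
        have h3 : Summable (fun T : ℕ => 1 / ((T:ℝ)+1) ^ 2) := by
          have := (_root_.summable_nat_add_iff (f := fun n : ℕ => 1 / (n:ℝ) ^ 2) 1).2 h2
          simpa using this
        have : Summable (fun T : ℕ => d⁻¹^2 * (1 / ((T:ℝ)+1) ^ 2)) := h3.mul_left _
        apply this.congr
        intro T
        rw [show ((2:ℝ)) = ((2:ℕ):ℝ) by norm_num, Real.rpow_natCast]
        field_simp
      rw [← ENNReal.ofReal_tsum_of_nonneg (fun T => by positivity) hsummable]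
      exact ENNReal.ofReal_ne_top
    filter_upwards [ae_eventually_notMem hsum] with ω hω
    filter_upwards [hω] with T hT
    have : ¬ (ENNReal.ofReal (d * (T+1)) ≤ (‖B (T+1) ω‖₊ : ℝ≥0∞)) := hT
    rw [← ENNReal.ofReal_coe_nnreal, coe_nnnorm,
      ENNReal.ofReal_le_ofReal_iff (norm_nonneg _)] at this
    rw [Real.norm_eq_abs] at this
    linarith [not_le.1 this]
  rw [← ae_all_iff] at key
  filter_upwards [key] with ω hω
  rw [NormedAddCommGroup.tendsto_nhds_zero]
  intro δ hδ
  obtain ⟨m, hm⟩ := exists_nat_one_div_lt hδ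
  obtain ⟨N, hN⟩ := eventually_atTop.1 (hω m)
  rw [eventually_atTop]
  refine ⟨N + 1, fun T hT => ?_⟩
  have hT1 : 1 ≤ T := by omega
  have hTpos : (0:ℝ) < T := by exact_mod_cast hT1
  have h := hN (T - 1) (by omega)
  have hTT : T - 1 + 1 = T := by omega
  rw [hTT] at h
  have hcast : ((T - 1 : ℕ) : ℝ) + 1 = (T : ℝ) := by
    have : ((T - 1 + 1 : ℕ) : ℝ) = (T:ℝ) := by rw [hTT]
    push_cast at this ⊢
    linarith
  rw [hcast] at h
  have : |B T ω| < δ * T := lt_of_lt_of_le h (by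
    apply mul_le_mul_of_nonneg_right hm.le hTpos.le)
  rw [Real.norm_eq_abs, abs_div, abs_of_pos hTpos, div_lt_iff₀ hTpos]
  linarith


/-- A withdrawal process with asymptotic rate `w > c + g` is not sustainable:
the wealth process `V(t) = V(t-1)·e^{G(t)+Δ(t)}·(1-W(t))`, `V(0) = 1`, satisfies
`limsup V(t) ≤ 1` a.s.; in particular `V(t)` does not tend to `∞` a.s. -/
theorem stmt_12
    {Ω : Type*} [MeasureSpace Ω] [IsProbabilityMeasure (ℙ : Measure Ω)]
    (α c g σε β : ℝ) (hσ : 0 < σε) (hβ : β ∈ Set.Ioo (0 : ℝ) 1)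
    (ε : ℕ → Ω → ℝ) (B : ℕ → Ω → ℝ) (G : ℕ → Ω → ℝ)
    (hεmeas : ∀ t, Measurable (ε t))
    (hGmeas : ∀ t, Measurable (G t))
    (hB0meas : Measurable (B 0))
    (hindep : iIndepFun (m := fun _ => Real.measurableSpace)
      (fun i : ℕ => if i = 0 then B 0 else ε i) ℙ)
    (hident : ∀ s t : ℕ, 1 ≤ s → 1 ≤ t → Measure.map (ε s) ℙ = Measure.map (ε t) ℙ)
    (hεL2 : ∀ t : ℕ, 1 ≤ t → MemLp (ε t) 2 ℙ)
    (hmean : ∀ t : ℕ, 1 ≤ t → ∫ ω, ε t ω ∂ℙ = 0)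
    (hvar : ∀ t : ℕ, 1 ≤ t → ∫ ω, (ε t ω) ^ 2 ∂ℙ = σε ^ 2)
    (hB0L2 : MemLp (B 0) 2 ℙ)
    (hrec : ∀ t : ℕ, ∀ ω, B (t + 1) ω = α + β * B t ω + ε (t + 1) ω)
    (hGindep : IndepFun (fun ω (t : ℕ) => G (t + 1) ω)
      (fun ω (t : ℕ) => ε (t + 1) ω) ℙ)
    (hGslln : ∀ᵐ ω ∂ℙ, Tendsto
      (fun T : ℕ => (∑ t ∈ Finset.range T, G (t + 1) ω) / T) atTop (𝓝 g))
    (W : ℕ → Ω → ℝ)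
    (hW : ∀ t : ℕ, 1 ≤ t → ∀ ω, W t ω ∈ Set.Ioo (0 : ℝ) 1)
    (w : ℝ) (hwgt : c + g < w)
    (hWslln : ∀ᵐ ω ∂ℙ, Tendsto
      (fun T : ℕ => (∑ t ∈ Finset.range T, W (t + 1) ω) / T) atTop (𝓝 w))
    (V : ℕ → Ω → ℝ)
    (hV0 : ∀ ω, V 0 ω = 1)
    (hVrec : ∀ t : ℕ, ∀ ω,
      V (t + 1) ω = V t ω * Real.exp (G (t + 1) ω + (B (t + 1) ω - B t ω + c))
        * (1 - W (t + 1) ω)) :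
    ∀ᵐ ω ∂ℙ,
      Filter.limsup (fun t : ℕ => (V t ω : EReal)) atTop ≤ 1
        ∧ ¬ Tendsto (fun t : ℕ => V t ω) atTop atTop := by
  obtain ⟨hβ0, hβ1⟩ := hβ
  -- measurability and integrability of B t
  have hBmeas : ∀ t, Measurable (B t) := by
    intro t
    induction t with
    | zero => exact hB0meas
    | succ n ih =>
      have hfe : B (n+1) = fun ω => α + β * B n ω + ε (n+1) ω := funext (hrec n)
      rw [hfe]
      exact (measurable_const.add (ih.const_mul β)).add (hεmeas (n+1))
  have hBL2 : ∀ t, MemLp (B t) 2 ℙ := by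
    intro t
    induction t with
    | zero => exact hB0L2
    | succ n ih =>
      have hfe : B (n+1) = fun ω => α + β * B n ω + ε (n+1) ω := funext (hrec n)
      rw [hfe]
      exact ((memLp_const α).add (ih.const_mul β)).add (hεL2 (n+1) (by omega))
  -- the noise has constant L² norm
  have hεnorm : ∀ t : ℕ, eLpNorm (ε (t+1)) 2 ℙ = eLpNorm (ε 1) 2 ℙ := by
    intro t
    have h1 : ∀ s : ℕ, eLpNorm (ε s) 2 ℙ = eLpNorm (id : ℝ → ℝ) 2 (Measure.map (ε s) ℙ) := by
      intro s
      rw [eLpNorm_map_measure measurable_id.aestronglyMeasurable (hεmeas s).aemeasurable]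
      rfl
    rw [h1 (t+1), h1 1, hident (t+1) 1 (by omega) le_rfl]
  -- uniform L² bound on B t
  set a0 : ℝ := |α| + (eLpNorm (ε 1) 2 ℙ).toReal with ha0def
  set K : ℝ := max (eLpNorm (B 0) 2 ℙ).toReal (a0 / (1 - β)) with hKdef
  have ha0 : 0 ≤ a0 := add_nonneg (abs_nonneg _) ENNReal.toReal_nonneg
  have hK0 : (0:ℝ) ≤ K :=
    le_trans (div_nonneg ha0 (by linarith)) (le_max_right _ _)
  have hKa : a0 + β * K ≤ K := by
    have h1 : a0 / (1-β) ≤ K := le_max_right _ _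
    have h2 : (0:ℝ) < 1 - β := by linarith
    have h3 : a0 ≤ K * (1 - β) := (div_le_iff₀ h2).1 h1
    nlinarith
  have hK : ∀ t, eLpNorm (B t) 2 ℙ ≤ ENNReal.ofReal K := by
    intro t
    induction t with
    | zero =>
      rw [← ENNReal.ofReal_toReal (hBL2 0).2.ne]
      exact ENNReal.ofReal_le_ofReal (le_max_left _ _)
    | succ n ih =>
      have hfe : B (n+1) = ((fun _ => α) + (fun ω => β * B n ω)) + ε (n+1) := by
        funext ω
        rw [hrec n ω]
        rfl
      have hsm : eLpNorm (fun ω => β * B n ω) 2 ℙ ≤ ENNReal.ofReal β * eLpNorm (B n) 2 ℙ := by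
        have heq : (fun ω => β * B n ω) = β • B n := by
          funext ω; simp [smul_eq_mul]
        rw [heq]
        refine (eLpNorm_const_smul_le (c := β) (f := B n) (p := 2) (μ := ℙ)).trans ?_
        rw [Real.enorm_eq_ofReal hβ0.le]
      have hca : eLpNorm (fun _ : Ω => α) 2 ℙ = ENNReal.ofReal |α| := by
        rw [eLpNorm_const α (by norm_num) (NeZero.ne ℙ)]
        simp [Real.enorm_eq_ofReal_abs]
      have hεfin : eLpNorm (ε 1) 2 ℙ ≠ ⊤ := (hεL2 1 le_rfl).2.ne
      calc eLpNorm (B (n+1)) 2 ℙ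
          ≤ eLpNorm ((fun _ => α) + (fun ω => β * B n ω)) 2 ℙ + eLpNorm (ε (n+1)) 2 ℙ := by
            rw [hfe]
            exact eLpNorm_add_le
              (aestronglyMeasurable_const.add ((hBmeas n).const_mul β).aestronglyMeasurable)
              (hεmeas _).aestronglyMeasurable one_le_two
        _ ≤ (ENNReal.ofReal |α| + ENNReal.ofReal β * ENNReal.ofReal K)
              + ENNReal.ofReal ((eLpNorm (ε 1) 2 ℙ).toReal) := by
            rw [hεnorm n, ENNReal.ofReal_toReal hεfin]
            gcongr
            · rw [← hca]
              exact eLpNorm_add_le aestronglyMeasurable_const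
                ((hBmeas n).const_mul β).aestronglyMeasurable one_le_two |>.trans
                (by rw [hca]; gcongr; exact hsm.trans (by gcongr))
        _ = ENNReal.ofReal (|α| + β * K + (eLpNorm (ε 1) 2 ℙ).toReal) := by
            rw [← ENNReal.ofReal_mul hβ0.le, ← ENNReal.ofReal_add (abs_nonneg _)
              (mul_nonneg hβ0.le hK0),
              ← ENNReal.ofReal_add (add_nonneg (abs_nonneg _) (mul_nonneg hβ0.le hK0))
                ENNReal.toReal_nonneg]
        _ ≤ ENNReal.ofReal K := by
            apply ENNReal.ofReal_le_ofReal
            have : |α| + β * K + (eLpNorm (ε 1) 2 ℙ).toReal = a0 + β * K := by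
              rw [ha0def]; ring
            linarith [hKa, this.le, this.ge]
  have haeB := aux_B B hBmeas K hK
  filter_upwards [hGslln, hWslln, haeB] with ω hGω hWω hBω
  have hVtend : Tendsto (fun t => V t ω) atTop (𝓝 0) :=
    aux_det c g w hwgt (fun t => G t ω) (fun t => W t ω) (fun t => B t ω) (fun t => V t ω)
      (fun t ht => hW t ht ω) hGω hWω hBω (hV0 ω) (fun t => hVrec t ω)
  constructor
  · have hco : Tendsto (fun t : ℕ => (V t ω : EReal)) atTop (𝓝 ((0:ℝ) : EReal)) :=
      EReal.tendsto_coe.2 hVtend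
    rw [hco.limsup_eq]
    simp
  · intro hcon
    have h1 := hcon.eventually_ge_atTop 1
    have h2 : ∀ᶠ t in atTop, V t ω < 1 := hVtend.eventually (eventually_lt_nhds one_pos)
    obtain ⟨t, ht1, ht2⟩ := (h1.and h2).exists
    linarith
end

section
/- For the growth-dependent withdrawal process W(t) = 1 - e^{w - G(t)}, the resulting wealth process is independent of the growth terms and has the explicit form V(T) = exp(B(T) - B(0) + (c + w)·T) for every T ≥ 0, where V(0) = 1 and V(t) = V(t-1)·e^{G(t)+Δ(t)}·(1 - W(t)). -/
/-! The withdrawal factor `1 - W(t) = e^{w - G(t)}` cancels the growth factor `e^{G(t)}`, so each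
step multiplies the wealth by `e^{B(t) - B(t-1) + c + w}`, and these factors telescope. -/

open MeasureTheory ProbabilityTheory Filter Topology Real

theorem eq_exp_of_mul_exp_sub_add {f V : ℕ → ℝ} {a : ℝ} (h0 : V 0 = 1)
    (hsucc : ∀ t, V (t + 1) = V t * exp (f (t + 1) - f t + a)) (T : ℕ) :
    V T = exp (f T - f 0 + a * T) := by
  induction T with
  | zero => simp [h0]
  | succ t ih =>
    rw [hsucc, ih, ← exp_add]
    push_cast
    ring_nf

theorem exp_add_mul_exp_sub_cancel (g d w : ℝ) : exp (g + d) * exp (w - g) = exp (d + w) := by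
  rw [← exp_add]
  ring_nf

theorem stmt_14_general
    {Ω : Type*}
    (c w : ℝ) (B : ℕ → Ω → ℝ) (G : ℕ → Ω → ℝ) (W : ℕ → Ω → ℝ) (V : ℕ → Ω → ℝ)
    (hW : ∀ t : ℕ, 1 ≤ t → ∀ ω, W t ω = 1 - Real.exp (w - G t ω))
    (hV0 : ∀ ω, V 0 ω = 1)
    (hVrec : ∀ t : ℕ, ∀ ω,
      V (t + 1) ω = V t ω * Real.exp (G (t + 1) ω + (B (t + 1) ω - B t ω + c))
        * (1 - W (t + 1) ω)) :
    ∀ T : ℕ, ∀ ω, V T ω = Real.exp (B T ω - B 0 ω + (c + w) * T) := by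
  intro T ω
  refine eq_exp_of_mul_exp_sub_add (f := (B · ω)) (V := (V · ω)) (hV0 ω) (fun t => ?_) T
  rw [hVrec, hW (t + 1) t.succ_pos, sub_sub_cancel, mul_assoc, exp_add_mul_exp_sub_cancel,
    add_assoc]

/-- For the growth-dependent withdrawal process `W(t) = 1 - e^{w - G(t)}`, the
wealth process has the explicit form `V(T) = exp(B(T) - B(0) + (c+w)·T)`, which
does not involve the growth terms `G`. -/
theorem stmt_14
    {Ω : Type*} [MeasureSpace Ω] [IsProbabilityMeasure (ℙ : Measure Ω)]
    (c w : ℝ) (B : ℕ → Ω → ℝ) (G : ℕ → Ω → ℝ) (W : ℕ → Ω → ℝ) (V : ℕ → Ω → ℝ)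
    (hW : ∀ t : ℕ, 1 ≤ t → ∀ ω, W t ω = 1 - Real.exp (w - G t ω))
    (hV0 : ∀ ω, V 0 ω = 1)
    (hVrec : ∀ t : ℕ, ∀ ω,
      V (t + 1) ω = V t ω * Real.exp (G (t + 1) ω + (B (t + 1) ω - B t ω + c))
        * (1 - W (t + 1) ω)) :
    ∀ T : ℕ, ∀ ω, V T ω = Real.exp (B T ω - B 0 ω + (c + w) * T) :=
  stmt_14_general c w B G W V hW hV0 hVrec
end

section
/- The optimal log-utility portfolio is attained by pointwise maximization of the integrand: let T > 0, a² := σ² + ρ² > 0, let f : ℝ → ℝ, and let h, r : [0,T] → ℝ be measurable functions with f ∘ h and r bounded. For any bounded measurable portfolio π : [0,T] → ℝ, define J(π) = ∫₀ᵀ [ (c+g)·π(t) + π(t)·f(h(t)) + (1 - π(t))·r(t) + (a²/2)·(π(t) - π(t)²) ] dt. Then the portfolio π*(t) = 1/2 + (c + g + f(h(t)) - r(t))/a² satisfies J(π) ≤ J(π*) for every bounded measurable π. -/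
/-! For each `t` the integrand is a concave quadratic in the weight `p`, and completing the
square gives `rate(π*(t)) - rate(p) = a²/2 · (π*(t) - p)²`. Integrating this pointwise inequality
over `[0,T]` proves the claim; both integrands are integrable as continuous functions of bounded
measurable data. -/

open MeasureTheory

noncomputable section

/-- Here `cg` stands for `c + g` and `A` for `a² = σ² + ρ²`. -/
def logUtilityRate (cg A fh r p : ℝ) : ℝ :=
  cg * p + p * fh + (1 - p) * r + A / 2 * (p - p ^ 2)

def optimalPortfolio (cg A fh r : ℝ) : ℝ :=
  1 / 2 + (cg + fh - r) / A

lemma logUtilityRate_optimalPortfolio_sub {cg A : ℝ} (hA : A ≠ 0) (fh r p : ℝ) :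
    logUtilityRate cg A fh r (optimalPortfolio cg A fh r) - logUtilityRate cg A fh r p
      = A / 2 * (optimalPortfolio cg A fh r - p) ^ 2 := by
  unfold logUtilityRate optimalPortfolio
  field_simp
  ring

lemma logUtilityRate_le_optimalPortfolio {cg A : ℝ} (hA : 0 < A) (fh r p : ℝ) :
    logUtilityRate cg A fh r p ≤ logUtilityRate cg A fh r (optimalPortfolio cg A fh r) := by
  have := logUtilityRate_optimalPortfolio_sub (cg := cg) hA.ne' fh r p
  nlinarith [sq_nonneg (optimalPortfolio cg A fh r - p)]

lemma Continuous.intervalIntegrable_comp_of_mapsTo {E : Type*} [TopologicalSpace E]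
    [MeasurableSpace E] [OpensMeasurableSpace E] {F : E → ℝ} (hF : Continuous F)
    {u : ℝ → E} (hu : Measurable u) {a b : ℝ} {K : Set E} (hK : IsCompact K)
    (huK : Set.MapsTo u (Set.uIcc a b) K) :
    IntervalIntegrable (F ∘ u) volume a b := by
  obtain ⟨C, hC⟩ := hK.exists_bound_of_continuousOn hF.continuousOn
  refine IntegrableOn.intervalIntegrable <|
    Measure.integrableOn_of_bounded measure_Icc_lt_top.ne
      (hF.measurable.comp hu).aestronglyMeasurable (M := C) ?_
  filter_upwards [ae_restrict_mem measurableSet_uIcc] with t ht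
  exact hC _ (huK ht)

end

theorem stmt_16_general
    (c g σ ρ T : ℝ) (hσ : 0 < σ) (hT : 0 < T)
    (f : ℝ → ℝ) (h r : ℝ → ℝ)
    (hrmeas : Measurable r)
    (hfhmeas : Measurable fun t => f (h t))
    (hfhbdd : ∃ M : ℝ, ∀ t ∈ Set.Icc (0 : ℝ) T, |f (h t)| ≤ M)
    (hrbdd : ∃ M : ℝ, ∀ t ∈ Set.Icc (0 : ℝ) T, |r t| ≤ M) :
    ∀ π : ℝ → ℝ, Measurable π → (∃ K : ℝ, ∀ t ∈ Set.Icc (0 : ℝ) T, |π t| ≤ K) →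
      (∫ t in (0 : ℝ)..T,
        ((c + g) * π t + π t * f (h t) + (1 - π t) * r t
          + (σ ^ 2 + ρ ^ 2) / 2 * (π t - (π t) ^ 2)))
      ≤ ∫ t in (0 : ℝ)..T,
          ((c + g) * (1 / 2 + (c + g + f (h t) - r t) / (σ ^ 2 + ρ ^ 2))
            + (1 / 2 + (c + g + f (h t) - r t) / (σ ^ 2 + ρ ^ 2)) * f (h t)
            + (1 - (1 / 2 + (c + g + f (h t) - r t) / (σ ^ 2 + ρ ^ 2))) * r t
            + (σ ^ 2 + ρ ^ 2) / 2
              * ((1 / 2 + (c + g + f (h t) - r t) / (σ ^ 2 + ρ ^ 2))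
                - (1 / 2 + (c + g + f (h t) - r t) / (σ ^ 2 + ρ ^ 2)) ^ 2)) := by
  rintro π hπ ⟨K, hK⟩
  obtain ⟨Mf, hMf⟩ := hfhbdd
  obtain ⟨Mr, hMr⟩ := hrbdd
  set A := σ ^ 2 + ρ ^ 2
  have hA : 0 < A := add_pos_of_pos_of_nonneg (pow_pos hσ 2) (sq_nonneg ρ)
  rw [← Set.uIcc_of_le hT.le] at hK hMf hMr
  have hdata : Set.MapsTo (fun t => (f (h t), r t)) (Set.uIcc 0 T)
      (Set.Icc (-Mf) Mf ×ˢ Set.Icc (-Mr) Mr) := fun t ht =>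
    ⟨abs_le.mp (hMf t ht), abs_le.mp (hMr t ht)⟩
  have hint : IntervalIntegrable
      (fun t => logUtilityRate (c + g) A (f (h t)) (r t) (π t)) volume 0 T :=
    Continuous.intervalIntegrable_comp_of_mapsTo
      (F := fun x : ℝ × ℝ × ℝ => logUtilityRate (c + g) A x.2.1 x.2.2 x.1)
      (by unfold logUtilityRate; fun_prop) (hπ.prodMk (hfhmeas.prodMk hrmeas))
      (isCompact_Icc.prod (isCompact_Icc.prod isCompact_Icc))
      fun t ht => ⟨abs_le.mp (hK t ht), hdata ht⟩
  have hint_opt : IntervalIntegrable (fun t => logUtilityRate (c + g) A (f (h t)) (r t)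
      (optimalPortfolio (c + g) A (f (h t)) (r t))) volume 0 T :=
    Continuous.intervalIntegrable_comp_of_mapsTo
      (F := fun x : ℝ × ℝ =>
        logUtilityRate (c + g) A x.1 x.2 (optimalPortfolio (c + g) A x.1 x.2))
      (by unfold logUtilityRate optimalPortfolio; fun_prop) (hfhmeas.prodMk hrmeas)
      (isCompact_Icc.prod isCompact_Icc) hdata
  exact intervalIntegral.integral_mono_on hT.le hint hint_opt fun t _ =>
    logUtilityRate_le_optimalPortfolio hA _ _ _

/-- The optimal log-utility portfolio is attained by pointwise maximization of the
integrand: with `a² = σ² + ρ²`, for any bounded measurable portfolio `π` on `[0,T]`,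
`J(π) = ∫₀ᵀ [(c+g)π(t) + π(t)f(h(t)) + (1-π(t))r(t) + (a²/2)(π(t) - π(t)²)] dt`
is at most `J(π*)` for `π*(t) = 1/2 + (c + g + f(h(t)) - r(t))/a²`. -/
theorem stmt_16
    (c g σ ρ T : ℝ) (hσ : 0 < σ) (hρ : 0 < ρ) (hT : 0 < T)
    (f : ℝ → ℝ) (h r : ℝ → ℝ)
    (hmeas : Measurable h) (hrmeas : Measurable r)
    (hfhmeas : Measurable fun t => f (h t))
    (hfhbdd : ∃ M : ℝ, ∀ t ∈ Set.Icc (0 : ℝ) T, |f (h t)| ≤ M)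
    (hrbdd : ∃ M : ℝ, ∀ t ∈ Set.Icc (0 : ℝ) T, |r t| ≤ M) :
    ∀ π : ℝ → ℝ, Measurable π → (∃ K : ℝ, ∀ t ∈ Set.Icc (0 : ℝ) T, |π t| ≤ K) →
      (∫ t in (0 : ℝ)..T,
        ((c + g) * π t + π t * f (h t) + (1 - π t) * r t
          + (σ ^ 2 + ρ ^ 2) / 2 * (π t - (π t) ^ 2)))
      ≤ ∫ t in (0 : ℝ)..T,
          ((c + g) * (1 / 2 + (c + g + f (h t) - r t) / (σ ^ 2 + ρ ^ 2))
            + (1 / 2 + (c + g + f (h t) - r t) / (σ ^ 2 + ρ ^ 2)) * f (h t)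
            + (1 - (1 / 2 + (c + g + f (h t) - r t) / (σ ^ 2 + ρ ^ 2))) * r t
            + (σ ^ 2 + ρ ^ 2) / 2
              * ((1 / 2 + (c + g + f (h t) - r t) / (σ ^ 2 + ρ ^ 2))
                - (1 / 2 + (c + g + f (h t) - r t) / (σ ^ 2 + ρ ^ 2)) ^ 2)) :=
  stmt_16_general c g σ ρ T hσ hT f h r hrmeas hfhmeas hfhbdd hrbdd
end
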